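/- arXiv:1702.04813 — 8 statements merged into one kernel-verified Lean document; each statement's English description precedes it below -/
import Mathlib

section
/- A point x in [0,1]^n lies in the convex hull of a subset F of {0,1}^n if and only if there exist sets X_1,...,X_n, each a finite union of half-open subintervals of [0,1), such that the Lebesgue measure of X_i equals x_i for all i, and for every t in [0,1), the 0/1 indicator vector of the set {i : t ∈ X_i} belongs to F. -/
/-! A convex combination `∑ a, w a • z a` of points of `F` is realised by cutting `[0,1)` into
consecutive intervals of lengths `w a` and letting `X i` be the union of the intervals whose
vertex `z a` has `i`-th coordinate `1`. Conversely, the indicator vector of `{i | t ∈ X i}` has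
mean `x` over `[0,1)` and takes values in a finite subset of `F`, whose convex hull is closed,
so `x` lies in that hull by Jensen's inequality. -/

open MeasureTheory Set

/-- A finite union of half-open subintervals of `[0,1)`. -/
def IsIcoUnion (X : Set ℝ) : Prop :=
  X ⊆ Set.Ico 0 1 ∧ ∃ s : Finset (ℝ × ℝ), X = ⋃ p ∈ s, Set.Ico p.1 p.2

open Function

theorem measureReal_mem_convexHull_of_ae_indicator_mem {α ι : Type*} [MeasurableSpace α]
    [Fintype ι] (μ : Measure α) [IsProbabilityMeasure μ] {F : Set (ι → ℝ)} {X : ι → Set α}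
    (hX : ∀ i, MeasurableSet (X i))
    (hF : ∀ᵐ t ∂μ, (fun i => (X i).indicator (fun _ => (1:ℝ)) t) ∈ F) :
    (fun i => μ.real (X i)) ∈ convexHull ℝ F := by
  set φ : α → ι → ℝ := fun t i => (X i).indicator (fun _ => (1:ℝ)) t
  set S : Set (ι → ℝ) := F ∩ univ.pi fun _ => {0, 1}
  have hS : S.Finite := (Set.Finite.pi fun _ => toFinite _).inter_of_right F
  have hφS : ∀ᵐ t ∂μ, φ t ∈ S := hF.mono fun t ht =>
    ⟨ht, fun i _ => by by_cases h : t ∈ X i <;> simp [φ, h]⟩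
  have hφi : ∀ i, Integrable (φ · i) μ := fun i => (integrable_const 1).indicator (hX i)
  have hφ : ∫ t, φ t ∂μ = fun i => μ.real (X i) := by
    ext i
    rw [eval_integral hφi]
    exact integral_indicator_one (hX i)
  rw [← hφ]
  exact convexHull_mono inter_subset_left <|
    (convex_convexHull ℝ S).integral_mem (hS.isClosed_convexHull ℝ)
      (hφS.mono fun t ht => subset_convexHull ℝ S ht) (Integrable.of_eval hφi)

theorem isIcoUnion_biUnion {κ : Type*} (s : Finset κ) (l r : κ → ℝ)
    (h : ∀ a ∈ s, Ico (l a) (r a) ⊆ Ico 0 1) : IsIcoUnion (⋃ a ∈ s, Ico (l a) (r a)) :=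
  ⟨iUnion₂_subset h, s.image (fun a => (l a, r a)), by rw [Finset.set_biUnion_finset_image]⟩

theorem mem_biUnion_iff_of_pairwise_disjoint {α κ : Type*} {I : κ → Set α}
    (hI : Pairwise (Disjoint on I)) {s : Finset κ} {a : κ} {t : α} (ht : t ∈ I a) :
    t ∈ ⋃ b ∈ s, I b ↔ a ∈ s := by
  refine ⟨fun h => ?_, fun ha => mem_biUnion ha ht⟩
  obtain ⟨b, hb, htb⟩ := mem_iUnion₂.1 h
  obtain rfl : b = a := by_contra fun hba => (hI hba).ne_of_mem htb ht rfl
  exact hb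

theorem exists_Ico_partition {κ : Type*} [Fintype κ] (w : κ → ℝ) (hw₀ : ∀ a, 0 ≤ w a)
    (hw₁ : ∑ a, w a = 1) :
    ∃ l r : κ → ℝ, (∀ a, r a - l a = w a) ∧ (∀ a, Ico (l a) (r a) ⊆ Ico 0 1) ∧
      Pairwise (Disjoint on fun a => Ico (l a) (r a)) ∧
      ∀ t ∈ Ico (0:ℝ) 1, ∃ a, t ∈ Ico (l a) (r a) := by
  set m := Fintype.card κ
  set e := Fintype.equivFin κ
  set W : ℕ → ℝ := fun k => if h : k < m then w (e.symm ⟨k, h⟩) else 0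
  set c : ℕ → ℝ := fun k => ∑ j ∈ Finset.range k, W j
  have hW : ∀ a, W (e a) = w a := fun a => by
    simp only [W, dif_pos (show (e a : ℕ) < m from (e a).isLt), Fin.eta, Equiv.symm_apply_apply]
  have hc : Monotone c := monotone_nat_of_le_succ fun k => by
    simp only [c, Finset.sum_range_succ, le_add_iff_nonneg_right, W]
    split_ifs <;> simp [hw₀]
  have hc0 : c 0 = 0 := Finset.sum_range_zero W
  have hcm : c m = 1 := by
    rw [← hw₁, ← e.symm.sum_comp]
    exact (Finset.sum_range W).trans (Finset.sum_congr rfl fun k _ => by simp [W])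
  refine ⟨fun a => c (e a), fun a => c (e a + 1), fun a => ?_, fun a => ?_, ?_, ?_⟩
  · simp only [c, Finset.sum_range_succ_sub_sum, hW]
  · rw [← hc0, ← hcm]
    exact Ico_subset_Ico (hc (Nat.zero_le _)) (hc (e a).isLt)
  · exact (hc.pairwise_disjoint_on_Ico_succ.comp_of_injective
      (Fin.val_injective.comp e.injective) :)
  · intro t ht
    rw [← hc0, ← hcm] at ht
    obtain ⟨k, hk, htk⟩ := mem_iUnion₂.1 (Ico_subset_biUnion_Ico m c ht)
    exact ⟨e.symm ⟨k, Finset.mem_range.1 hk⟩, by simpa using htk⟩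

theorem exists_isIcoUnion_of_convex_combination {ι κ : Type*} [Fintype κ] {F : Set (ι → ℝ)}
    (hF : ∀ v ∈ F, ∀ i, v i = 0 ∨ v i = 1) (w : κ → ℝ) (z : κ → ι → ℝ) (hw₀ : ∀ a, 0 ≤ w a)
    (hw₁ : ∑ a, w a = 1) (hz : ∀ a, z a ∈ F) :
    ∃ X : ι → Set ℝ, (∀ i, IsIcoUnion (X i)) ∧ (∀ i, (volume (X i)).toReal = ∑ a, w a * z a i) ∧
      ∀ t ∈ Ico (0:ℝ) 1, (fun i => (X i).indicator (fun _ => (1:ℝ)) t) ∈ F := by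
  classical
  obtain ⟨l, r, hlen, hsub, hdisj, hcover⟩ := exists_Ico_partition w hw₀ hw₁
  set X : ι → Set ℝ := fun i => ⋃ a ∈ Finset.univ.filter (z · i = 1), Ico (l a) (r a)
  refine ⟨X, fun i => isIcoUnion_biUnion _ l r fun a _ => hsub a, fun i => ?_, fun t ht => ?_⟩
  · rw [measure_biUnion_finset (fun a _ b _ hab => hdisj hab) fun a _ => measurableSet_Ico,
      ENNReal.toReal_sum fun a _ => measure_Ico_lt_top.ne, Finset.sum_filter]
    refine Finset.sum_congr rfl fun a _ => ?_
    rw [Real.volume_Ico, hlen, ENNReal.toReal_ofReal (hw₀ a)]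
    rcases hF _ (hz a) i with h | h <;> simp [h]
  · obtain ⟨a, hta⟩ := hcover t ht
    convert hz a using 1
    ext i
    rw [indicator_apply, mem_biUnion_iff_of_pairwise_disjoint hdisj hta]
    rcases hF _ (hz a) i with h | h <;> simp [h]

theorem stmt0_general (n : ℕ) (F : Set (Fin n → ℝ))
    (hF : ∀ v ∈ F, ∀ i, v i = 0 ∨ v i = 1)
    (x : Fin n → ℝ) :
    x ∈ convexHull ℝ F ↔
      ∃ X : Fin n → Set ℝ, (∀ i, IsIcoUnion (X i)) ∧
        (∀ i, (volume (X i)).toReal = x i) ∧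
        ∀ t ∈ Set.Ico (0:ℝ) 1,
          (fun i => (X i).indicator (fun _ => (1:ℝ)) t) ∈ F := by
  constructor
  · intro hx
    obtain ⟨κ, _, w, z, hw₀, hw₁, hz, rfl⟩ := mem_convexHull_iff_exists_fintype.1 hx
    simpa using exists_isIcoUnion_of_convex_combination hF w z hw₀ hw₁ hz
  · rintro ⟨X, hX, hvol, hvec⟩
    have : IsProbabilityMeasure (volume.restrict (Ico (0:ℝ) 1)) := ⟨by simp⟩
    have hXm : ∀ i, MeasurableSet (X i) := fun i => by
      obtain ⟨-, s, hs⟩ := hX i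
      rw [hs]
      exact s.measurableSet_biUnion fun p _ => measurableSet_Ico
    convert measureReal_mem_convexHull_of_ae_indicator_mem (volume.restrict (Ico (0:ℝ) 1)) hXm
      ((ae_restrict_iff' measurableSet_Ico).2 (.of_forall hvec))
    rw [measureReal_restrict_apply (hXm _), inter_eq_left.2 (hX _).1, ← hvol]
    rfl

/-- Zuckerberg's criterion: `x ∈ [0,1]^n` lies in the convex hull of a set `F` of 0/1
vectors iff there are finite unions of half-open intervals `X i ⊆ [0,1)` with
`μ (X i) = x i` and, for every `t ∈ [0,1)`, the indicator vector of `{i : t ∈ X i}`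
belongs to `F`. -/
theorem stmt0 (n : ℕ) (F : Set (Fin n → ℝ))
    (hF : ∀ v ∈ F, ∀ i, v i = 0 ∨ v i = 1)
    (x : Fin n → ℝ) (hx : ∀ i, x i ∈ Set.Icc (0:ℝ) 1) :
    x ∈ convexHull ℝ F ↔
      ∃ X : Fin n → Set ℝ, (∀ i, IsIcoUnion (X i)) ∧
        (∀ i, (volume (X i)).toReal = x i) ∧
        ∀ t ∈ Set.Ico (0:ℝ) 1,
          (fun i => (X i).indicator (fun _ => (1:ℝ)) t) ∈ F :=
  stmt0_general n F hF x
end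

section
/- For a bilinear function f(x) = Σ_{ij∈E} a_{ij} x_i x_j on [0,1]^n, the convex envelope of f over [0,1]^n at a point x equals the minimum of Σ_{ij∈E} a_{ij} μ(X_i ∩ X_j) over all choices of sets X_1,...,X_n, each a finite union of half-open subintervals of [0,1), with μ(X_i) = x_i for all i; similarly the concave envelope equals the corresponding maximum. -/
open MeasureTheory Set

lemma IsIcoUnion.measurableSet {X : Set ℝ} (h : IsIcoUnion X) : MeasurableSet X := by
  obtain ⟨-, s, rfl⟩ := h
  exact s.measurableSet_biUnion (fun p _ => measurableSet_Ico)


/-- Vertex set of the graph of the bilinear function over the cube. -/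
def Vset (n : ℕ) (E : Finset (Fin n × Fin n)) (a : Fin n × Fin n → ℝ) :
    Set ((Fin n → ℝ) × ℝ) :=
  {p : (Fin n → ℝ) × ℝ | (∀ i, p.1 i = 0 ∨ p.1 i = 1) ∧
    p.2 = ∑ e ∈ E, a e * p.1 e.1 * p.1 e.2}

/-- The vertex point associated with a boolean vector. -/
noncomputable def vertF (n : ℕ) (E : Finset (Fin n × Fin n)) (a : Fin n × Fin n → ℝ)
    (b : Fin n → Bool) : (Fin n → ℝ) × ℝ :=
  (fun i => if b i then (1:ℝ) else 0,
   ∑ e ∈ E, a e * (if b e.1 then (1:ℝ) else 0) * (if b e.2 then (1:ℝ) else 0))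

lemma vertF_mem (n : ℕ) (E : Finset (Fin n × Fin n)) (a : Fin n × Fin n → ℝ)
    (b : Fin n → Bool) : vertF n E a b ∈ Vset n E a := by
  constructor
  · intro i
    by_cases h : b i <;> simp [vertF, h]
  · rfl

lemma vertF_injective (n : ℕ) (E : Finset (Fin n × Fin n)) (a : Fin n × Fin n → ℝ) :
    Function.Injective (vertF n E a) := by
  intro b b' h
  funext i
  have := congrArg (fun p => p.1 i) h
  simp only [vertF] at this
  by_cases hb : b i <;> by_cases hb' : b' i <;> simp [hb, hb'] at this ⊢ <;> norm_num at this

lemma Vset_eq (n : ℕ) (E : Finset (Fin n × Fin n)) (a : Fin n × Fin n → ℝ) :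
    Vset n E a = ↑(Finset.image (vertF n E a) Finset.univ) := by
  classical
  ext p
  simp only [Finset.coe_image, Finset.coe_univ, Set.image_univ, Set.mem_range]
  constructor
  · rintro ⟨h1, h2⟩
    refine ⟨fun i => decide (p.1 i = 1), ?_⟩
    have hfst : (fun i => if decide (p.1 i = 1) then (1:ℝ) else 0) = p.1 := by
      funext i
      rcases h1 i with h | h <;> simp [h]
    refine Prod.ext hfst ?_
    · show (∑ e ∈ E, a e * (if decide (p.1 e.1 = 1) then (1:ℝ) else 0) *
          (if decide (p.1 e.2 = 1) then (1:ℝ) else 0)) = p.2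
      rw [h2]
      refine Finset.sum_congr rfl fun e _ => ?_
      rw [congrFun hfst e.1, congrFun hfst e.2]
  · rintro ⟨b, rfl⟩
    exact vertF_mem n E a b

lemma Vset_finite (n : ℕ) (E : Finset (Fin n × Fin n)) (a : Fin n × Fin n → ℝ) :
    (Vset n E a).Finite := by
  rw [Vset_eq]
  exact (Finset.image (vertF n E a) Finset.univ).finite_toSet

lemma book_fst (n : ℕ) (E : Finset (Fin n × Fin n)) (a : Fin n × Fin n → ℝ)
    (lam : (Fin n → Bool) → ℝ) (i : Fin n) :
    (∑ b : Fin n → Bool, lam b • vertF n E a b).1 i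
      = ∑ b ∈ Finset.univ.filter (fun b : Fin n → Bool => b i = true), lam b := by
  classical
  have h1 : (∑ b : Fin n → Bool, lam b • vertF n E a b).1
      = ∑ b : Fin n → Bool, lam b • (vertF n E a b).1 :=
    map_sum (AddMonoidHom.fst _ _) _ _
  rw [h1, Finset.sum_apply, Finset.sum_filter]
  refine Finset.sum_congr rfl fun b _ => ?_
  by_cases hb : b i <;> simp [vertF, hb]

/-- Second-component bookkeeping. -/
lemma book_snd (n : ℕ) (E : Finset (Fin n × Fin n)) (a : Fin n × Fin n → ℝ)
    (lam : (Fin n → Bool) → ℝ) :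
    (∑ b : Fin n → Bool, lam b • vertF n E a b).2
      = ∑ e ∈ E, a e *
          ∑ b ∈ Finset.univ.filter (fun b : Fin n → Bool => b e.1 && b e.2), lam b := by
  classical
  have h1 : (∑ b : Fin n → Bool, lam b • vertF n E a b).2
      = ∑ b : Fin n → Bool, lam b • (vertF n E a b).2 :=
    map_sum (AddMonoidHom.snd _ _) _ _
  rw [h1]
  simp only [vertF, smul_eq_mul, Finset.mul_sum]
  rw [Finset.sum_comm]
  refine Finset.sum_congr rfl fun e _ => ?_
  rw [Finset.sum_filter]
  refine Finset.sum_congr rfl fun b _ => ?_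
  by_cases h1 : b e.1 <;> by_cases h2 : b e.2 <;> simp [h1, h2] <;> ring

lemma subset_hull (n : ℕ) (E : Finset (Fin n × Fin n)) (a : Fin n × Fin n → ℝ)
    (X : Fin n → Set ℝ) (hX : ∀ i, IsIcoUnion (X i)) :
    ((fun i => (volume (X i)).toReal),
      ∑ e ∈ E, a e * (volume (X e.1 ∩ X e.2)).toReal) ∈ convexHull ℝ (Vset n E a) := by
  classical
  set Y : (Fin n → Bool) → Set ℝ := fun b =>
    Set.Ico (0:ℝ) 1 ∩ ⋂ i, (if b i then X i else (X i)ᶜ) with hY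
  have hXm : ∀ i, MeasurableSet (X i) := fun i => (hX i).measurableSet
  have hYm : ∀ b, MeasurableSet (Y b) := by
    intro b
    refine measurableSet_Ico.inter (MeasurableSet.iInter fun i => ?_)
    by_cases h : b i <;> simp [h, hXm i, (hXm i).compl]
  have hYdisjoint : ∀ b b' : Fin n → Bool, b ≠ b' → Disjoint (Y b) (Y b') := by
    intro b b' hbb'
    obtain ⟨i, hi⟩ := Function.ne_iff.mp hbb'
    rw [Set.disjoint_left]
    intro t ht ht'
    have h1 := Set.mem_iInter.mp ht.2 i
    have h2 := Set.mem_iInter.mp ht'.2 i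
    cases hb : b i <;> cases hb' : b' i
    · exact hi (by rw [hb, hb'])
    · rw [if_neg (by simp [hb])] at h1
      rw [if_pos hb'] at h2
      exact h1 h2
    · rw [if_pos hb] at h1
      rw [if_neg (by simp [hb'])] at h2
      exact h2 h1
    · exact hi (by rw [hb, hb'])
  have hkey : ∀ (T : Set ℝ) (P : (Fin n → Bool) → Bool),
      (∀ t, t ∈ T ↔ t ∈ Set.Ico (0:ℝ) 1 ∧ P (fun j => decide (t ∈ X j)) = true) →
      T = ⋃ b ∈ Finset.univ.filter (fun b : Fin n → Bool => P b = true), Y b := by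
    intro T P hT
    ext t
    simp only [Set.mem_iUnion, Finset.mem_filter, Finset.mem_univ, true_and, exists_prop]
    constructor
    · intro ht
      obtain ⟨ht01, hP⟩ := (hT t).mp ht
      refine ⟨fun j => decide (t ∈ X j), hP, ht01, Set.mem_iInter.mpr fun i => ?_⟩
      by_cases h : t ∈ X i <;> simp [h]
    · rintro ⟨b, hPb, htY⟩
      have hbt : (fun j => decide (t ∈ X j)) = b := by
        funext j
        have hj := Set.mem_iInter.mp htY.2 j
        cases hbj : b j
        · rw [if_neg (by simp [hbj])] at hj
          exact decide_eq_false hj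
        · rw [if_pos hbj] at hj
          exact decide_eq_true hj
      exact (hT t).mpr ⟨htY.1, by rw [hbt]; exact hPb⟩
  have hcoverX : ∀ i, X i
      = ⋃ b ∈ Finset.univ.filter (fun b : Fin n → Bool => b i = true), Y b := by
    intro i
    refine hkey (X i) (fun b => b i) fun t => ?_
    constructor
    · intro ht
      exact ⟨(hX i).1 ht, by simp [ht]⟩
    · rintro ⟨-, h⟩
      simpa using h
  have hcoverXX : ∀ i j : Fin n, X i ∩ X j
      = ⋃ b ∈ Finset.univ.filter (fun b : Fin n → Bool => (b i && b j) = true), Y b := by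
    intro i j
    refine hkey (X i ∩ X j) (fun b => b i && b j) fun t => ?_
    constructor
    · rintro ⟨hti, htj⟩
      exact ⟨(hX i).1 hti, by simp [hti, htj]⟩
    · rintro ⟨-, h⟩
      simp only [Bool.and_eq_true, decide_eq_true_eq] at h
      exact h
  have hcover01 : Set.Ico (0:ℝ) 1
      = ⋃ b ∈ (Finset.univ : Finset (Fin n → Bool)), Y b := by
    have h := hkey (Set.Ico (0:ℝ) 1) (fun _ => true) (fun t => by simp)
    simpa using h
  have hYfin : ∀ b, volume (Y b) ≠ ⊤ := by
    intro b
    have hle : volume (Y b) ≤ volume (Set.Ico (0:ℝ) 1) :=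
      measure_mono Set.inter_subset_left
    exact ne_top_of_le_ne_top (by simp [Real.volume_Ico]) hle
  have hvol : ∀ (s : Finset (Fin n → Bool)),
      (volume (⋃ b ∈ s, Y b)).toReal = ∑ b ∈ s, (volume (Y b)).toReal := by
    intro s
    rw [measure_biUnion_finset (fun b _ b' _ h => hYdisjoint b b' h) (fun b _ => hYm b)]
    exact ENNReal.toReal_sum (fun b _ => hYfin b)
  set lam : (Fin n → Bool) → ℝ := fun b => (volume (Y b)).toReal with hlam
  have hsum1 : ∑ b : Fin n → Bool, lam b = 1 := by
    rw [← hvol Finset.univ, ← hcover01]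
    simp [Real.volume_Ico]
  have heq : (∑ b : Fin n → Bool, lam b • vertF n E a b)
      = ((fun i => (volume (X i)).toReal),
          ∑ e ∈ E, a e * (volume (X e.1 ∩ X e.2)).toReal) := by
    refine Prod.ext ?_ ?_
    · funext i
      show (∑ b : Fin n → Bool, lam b • vertF n E a b).1 i = (volume (X i)).toReal
      rw [book_fst, hcoverX i, hvol]
    · show (∑ b : Fin n → Bool, lam b • vertF n E a b).2 = _
      rw [book_snd]
      refine Finset.sum_congr rfl fun e _ => ?_
      rw [hcoverXX e.1 e.2, hvol]
  have hmem : Finset.univ.centerMass lam (vertF n E a) ∈ convexHull ℝ (Vset n E a) :=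
    Finset.centerMass_mem_convexHull _ (fun b _ => ENNReal.toReal_nonneg)
      (by rw [hsum1]; exact one_pos) (fun b _ => vertF_mem n E a b)
  rw [Finset.centerMass_eq_of_sum_1 _ _ hsum1, heq] at hmem
  exact hmem

lemma hull_subset (n : ℕ) (E : Finset (Fin n × Fin n)) (a : Fin n × Fin n → ℝ)
    (q : (Fin n → ℝ) × ℝ) (hq : q ∈ convexHull ℝ (Vset n E a)) :
    ∃ X : Fin n → Set ℝ, (∀ i, IsIcoUnion (X i)) ∧
      (∀ i, (volume (X i)).toReal = q.1 i) ∧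
      q.2 = ∑ e ∈ E, a e * (volume (X e.1 ∩ X e.2)).toReal := by
  classical
  rw [Vset_eq] at hq
  rw [Finset.mem_convexHull'] at hq
  obtain ⟨w, hw0, hw1, hwq⟩ := hq
  -- pull back the weights along the injective vertex map
  set lam : (Fin n → Bool) → ℝ := fun b => w (vertF n E a b) with hlamdef
  have htrans : ∀ (f : ((Fin n → ℝ) × ℝ) → ℝ),
      ∑ y ∈ Finset.image (vertF n E a) Finset.univ, f y
        = ∑ b : Fin n → Bool, f (vertF n E a b) :=
    fun f => Finset.sum_image (fun b _ b' _ h => vertF_injective n E a h)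
  have hlam0 : ∀ b, 0 ≤ lam b := fun b =>
    hw0 _ (Finset.mem_image_of_mem _ (Finset.mem_univ b))
  have hsum1 : ∑ b : Fin n → Bool, lam b = 1 := by
    rw [← htrans w]; exact hw1
  have hsumq : ∑ b : Fin n → Bool, lam b • vertF n E a b = q := by
    rw [← hwq, Finset.sum_image (g := vertF n E a) (f := fun y => w y • y)
      (fun b _ b' _ h => vertF_injective n E a h)]
  -- enumerate the boolean vectors
  set m : ℕ := Fintype.card (Fin n → Bool) with hm
  set eqv : (Fin n → Bool) ≃ Fin m := Fintype.equivFin _ with heqv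
  set J : (Fin n → Bool) → ℕ := fun b => (eqv b : ℕ) with hJ
  have hJlt : ∀ b, J b < m := fun b => (eqv b).isLt
  have hJinj : Function.Injective J := fun b b' h => eqv.injective (Fin.ext h)
  set lam' : ℕ → ℝ := fun k => if h : k < m then lam (eqv.symm ⟨k, h⟩) else 0 with hlam'
  have hlam'0 : ∀ k, 0 ≤ lam' k := by
    intro k
    rw [hlam']
    dsimp only
    split
    · exact hlam0 _
    · exact le_refl 0
  set c : ℕ → ℝ := fun k => ∑ j ∈ Finset.range k, lam' j with hc
  have hcsucc : ∀ k, c (k + 1) = c k + lam' k := fun k => Finset.sum_range_succ _ k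
  have hcmono : Monotone c :=
    monotone_nat_of_le_succ (fun k => by rw [hcsucc]; linarith [hlam'0 k])
  have hlam'J : ∀ b, lam' (J b) = lam b := by
    intro b
    have hfin : (⟨J b, hJlt b⟩ : Fin m) = eqv b := Fin.eta _ _
    rw [hlam']
    dsimp only
    rw [dif_pos (hJlt b), hfin, Equiv.symm_apply_apply]
  have hc0 : c 0 = 0 := by simp [hc]
  have hcm : c m = 1 := by
    have h1 : ∀ k : Fin m, lam' ↑k = lam (eqv.symm k) := by
      intro k
      have hfin : (⟨(k : ℕ), k.isLt⟩ : Fin m) = k := Fin.eta _ _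
      rw [hlam']
      dsimp only
      rw [dif_pos k.isLt, hfin]
    calc c m = ∑ j ∈ Finset.range m, lam' j := rfl
      _ = ∑ k : Fin m, lam' ↑k := (Fin.sum_univ_eq_sum_range lam' m).symm
      _ = ∑ k : Fin m, lam (eqv.symm k) := Finset.sum_congr rfl (fun k _ => h1 k)
      _ = ∑ b, lam b := Equiv.sum_comp eqv.symm lam
      _ = 1 := hsum1
  have hcnn : ∀ k, 0 ≤ c k := fun k => hc0 ▸ hcmono (Nat.zero_le k)
  have hcle1 : ∀ k, k ≤ m → c k ≤ 1 := fun k hk => hcm ▸ hcmono hk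
  set I : (Fin n → Bool) → Set ℝ := fun b => Set.Ico (c (J b)) (c (J b + 1)) with hI
  have hIvol : ∀ b, volume (I b) = ENNReal.ofReal (lam b) := by
    intro b
    rw [hI]
    dsimp only
    rw [Real.volume_Ico, hcsucc, hlam'J]
    ring_nf
  have hIdisj : ∀ b b' : Fin n → Bool, b ≠ b' → Disjoint (I b) (I b') := by
    intro b b' h
    have hne : J b ≠ J b' := fun e => h (hJinj e)
    rcases hne.lt_or_gt with hlt | hlt
    · rw [hI, Set.Ico_disjoint_Ico]
      calc min (c (J b + 1)) (c (J b' + 1)) ≤ c (J b + 1) := min_le_left _ _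
        _ ≤ c (J b') := hcmono hlt
        _ ≤ max (c (J b)) (c (J b')) := le_max_right _ _
    · rw [hI, Set.Ico_disjoint_Ico]
      calc min (c (J b + 1)) (c (J b' + 1)) ≤ c (J b' + 1) := min_le_right _ _
        _ ≤ c (J b) := hcmono hlt
        _ ≤ max (c (J b)) (c (J b')) := le_max_left _ _
  have hvol : ∀ s : Finset (Fin n → Bool),
      (volume (⋃ b ∈ s, I b)).toReal = ∑ b ∈ s, lam b := by
    intro s
    rw [measure_biUnion_finset (fun b _ b' _ h => hIdisj b b' h)
      (fun b _ => measurableSet_Ico)]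
    rw [Finset.sum_congr rfl (fun b _ => hIvol b)]
    rw [ENNReal.toReal_sum (fun b _ => ENNReal.ofReal_ne_top)]
    exact Finset.sum_congr rfl (fun b _ => ENNReal.toReal_ofReal (hlam0 b))
  have hinter : ∀ s t : Finset (Fin n → Bool),
      (⋃ b ∈ s, I b) ∩ (⋃ b ∈ t, I b) = ⋃ b ∈ s ∩ t, I b := by
    intro s t
    ext u
    simp only [Set.mem_inter_iff, Set.mem_iUnion, exists_prop, Finset.mem_inter]
    constructor
    · rintro ⟨⟨b, hb, hu⟩, ⟨b', hb', hu'⟩⟩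
      have hbb : b = b' := by
        by_contra hne
        exact Set.disjoint_left.mp (hIdisj b b' hne) hu hu'
      exact ⟨b, ⟨hb, hbb ▸ hb'⟩, hu⟩
    · rintro ⟨b, ⟨hb, hb'⟩, hu⟩
      exact ⟨⟨b, hb, hu⟩, ⟨b, hb', hu⟩⟩
  refine ⟨fun i => ⋃ b ∈ Finset.univ.filter (fun b : Fin n → Bool => b i = true), I b,
    ?_, ?_, ?_⟩
  · intro i
    constructor
    · refine Set.iUnion₂_subset fun b _ => ?_
      rw [hI]
      exact Set.Ico_subset_Ico (hcnn (J b)) (hcle1 (J b + 1) (hJlt b))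
    · refine ⟨(Finset.univ.filter (fun b : Fin n → Bool => b i = true)).image
        (fun b => (c (J b), c (J b + 1))), ?_⟩
      ext t
      simp only [Set.mem_iUnion, exists_prop, Finset.mem_image]
      constructor
      · rintro ⟨b, hb, ht⟩
        exact ⟨(c (J b), c (J b + 1)), ⟨b, hb, rfl⟩, ht⟩
      · rintro ⟨p, ⟨b, hb, rfl⟩, ht⟩
        exact ⟨b, hb, ht⟩
  · intro i
    rw [hvol, ← book_fst n E a lam i, hsumq]
  · rw [← hsumq, book_snd]
    refine Finset.sum_congr rfl fun e _ => ?_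
    congr 1
    rw [hinter]
    rw [← Finset.filter_and]
    rw [show (Finset.univ.filter fun b : Fin n → Bool => b e.1 = true ∧ b e.2 = true)
        = Finset.univ.filter (fun b : Fin n → Bool => (b e.1 && b e.2) = true) from
      Finset.filter_congr (fun b _ => by simp [Bool.and_eq_true])]
    rw [hvol]

/-- Set-theoretic interpretation of the convex and concave envelopes of a bilinear
function `f(x) = ∑_{ij ∈ E} a_{ij} x_i x_j`: the convex envelope at `x` is the minimum
(and the concave envelope the maximum) of `∑_{ij ∈ E} a_{ij} μ(X_i ∩ X_j)` over all
families of finite interval unions `X_i ⊆ [0,1)` with `μ(X_i) = x_i`. -/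
theorem stmt1 (n : ℕ) (E : Finset (Fin n × Fin n)) (hE : ∀ e ∈ E, e.1 < e.2)
    (a : Fin n × Fin n → ℝ)
    (x : Fin n → ℝ) (hx : ∀ i, x i ∈ Set.Icc (0:ℝ) 1) :
    IsLeast
      {w : ℝ | ∃ X : Fin n → Set ℝ, (∀ i, IsIcoUnion (X i)) ∧
        (∀ i, (volume (X i)).toReal = x i) ∧
        w = ∑ e ∈ E, a e * (volume (X e.1 ∩ X e.2)).toReal}
      (sInf {z : ℝ | (x, z) ∈ convexHull ℝ
        {p : (Fin n → ℝ) × ℝ | (∀ i, p.1 i = 0 ∨ p.1 i = 1) ∧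
          p.2 = ∑ e ∈ E, a e * p.1 e.1 * p.1 e.2}}) ∧
    IsGreatest
      {w : ℝ | ∃ X : Fin n → Set ℝ, (∀ i, IsIcoUnion (X i)) ∧
        (∀ i, (volume (X i)).toReal = x i) ∧
        w = ∑ e ∈ E, a e * (volume (X e.1 ∩ X e.2)).toReal}
      (sSup {z : ℝ | (x, z) ∈ convexHull ℝ
        {p : (Fin n → ℝ) × ℝ | (∀ i, p.1 i = 0 ∨ p.1 i = 1) ∧
          p.2 = ∑ e ∈ E, a e * p.1 e.1 * p.1 e.2}}) := by
  classical
  have hVset : {p : (Fin n → ℝ) × ℝ | (∀ i, p.1 i = 0 ∨ p.1 i = 1) ∧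
      p.2 = ∑ e ∈ E, a e * p.1 e.1 * p.1 e.2} = Vset n E a := rfl
  rw [hVset]
  set S : Set ℝ := {w : ℝ | ∃ X : Fin n → Set ℝ, (∀ i, IsIcoUnion (X i)) ∧
    (∀ i, (volume (X i)).toReal = x i) ∧
    w = ∑ e ∈ E, a e * (volume (X e.1 ∩ X e.2)).toReal} with hS
  set Z : Set ℝ := {z : ℝ | (x, z) ∈ convexHull ℝ (Vset n E a)} with hZ
  have hSZ : S ⊆ Z := by
    rintro w ⟨X, h1, h2, rfl⟩
    have hmem := subset_hull n E a X h1
    have hxeq : (fun i => (volume (X i)).toReal) = x := funext h2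
    rw [hxeq] at hmem
    exact hmem
  have hZS : Z ⊆ S := by
    intro z hz
    obtain ⟨X, h1, h2, h3⟩ := hull_subset n E a (x, z) hz
    exact ⟨X, h1, h2, h3⟩
  have hSne : S.Nonempty := by
    refine ⟨∑ e ∈ E, a e * (volume (Set.Ico (0:ℝ) (x e.1) ∩ Set.Ico (0:ℝ) (x e.2))).toReal,
      fun i => Set.Ico 0 (x i), ?_, ?_, rfl⟩
    · intro i
      constructor
      · exact Set.Ico_subset_Ico le_rfl (hx i).2
      · refine ⟨{((0:ℝ), x i)}, ?_⟩
        simp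
    · intro i
      rw [Real.volume_Ico, sub_zero, ENNReal.toReal_ofReal (hx i).1]
  have hZne : Z.Nonempty := hSne.mono hSZ
  have hKcomp : IsCompact (convexHull ℝ (Vset n E a)) :=
    (Vset_finite n E a).isCompact_convexHull (𝕜 := ℝ)
  have hZclosed : IsClosed Z := by
    have : Z = (fun z => (x, z)) ⁻¹' (convexHull ℝ (Vset n E a)) := rfl
    rw [this]
    exact hKcomp.isClosed.preimage (Continuous.prodMk_right x)
  have hZsub : Z ⊆ Prod.snd '' (convexHull ℝ (Vset n E a)) :=
    fun z hz => ⟨(x, z), hz, rfl⟩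
  have hZbddB : BddBelow Z :=
    ((hKcomp.image continuous_snd).bddBelow).mono hZsub
  have hZbddA : BddAbove Z :=
    ((hKcomp.image continuous_snd).bddAbove).mono hZsub
  refine ⟨⟨?_, ?_⟩, ?_, ?_⟩
  · exact hZS (hZclosed.csInf_mem hZne hZbddB)
  · exact fun w hw => csInf_le hZbddB (hSZ hw)
  · exact hZS (hZclosed.csSup_mem hZne hZbddA)
  · exact fun w hw => le_csSup hZbddA (hSZ hw)
end

section
/- If all edge weights a_{ij} of the bilinear function f(x) = Σ_{ij∈E} a_{ij} x_i x_j are positive, then the concave envelope of f over [0,1]^n satisfies cav[f](x) = Σ_{ij∈E} a_{ij} min{x_i, x_j} for every x ∈ [0,1]^n. -/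
open Set
open scoped Finset

/-!
Write `g x = ∑ a_e min (x_i, x_j)`; it agrees with `f` on `{0,1}^n`.

With nonnegative weights `g` is concave, so its hypograph is a convex set containing the vertices
`(v, f v)`, hence their convex hull: `cav[f] ≤ g`.

Conversely, if `x` is not a vertex, let `c` be its smallest positive coordinate and `u` the
indicator of its support. Then `x = c u + (1 - c) y` with `y ∈ [0,1]^n` of smaller support, and
`g x = c g(u) + (1 - c) g(y)`, because subtracting `c` from all positive coordinates lowers the
minimum of every pair by `c` or keeps it at `0`. Induction on the size of the support writes
`(x, g x)` as a convex combination of vertices, so `cav[f] ≥ g`.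
-/

theorem ConcaveOn.finset_sum {𝕜 E β ι : Type*} [Semiring 𝕜] [PartialOrder 𝕜]
    [AddCommMonoid E] [AddCommMonoid β] [PartialOrder β] [IsOrderedAddMonoid β]
    [SMul 𝕜 E] [Module 𝕜 β] {s : Set E} (hs : Convex 𝕜 s) {t : Finset ι} {f : ι → E → β}
    (hf : ∀ i ∈ t, ConcaveOn 𝕜 s (f i)) : ConcaveOn 𝕜 s (fun x => ∑ i ∈ t, f i x) := by
  classical
  induction t using Finset.induction_on with
  | empty => simpa using concaveOn_const 0 hs
  | insert i t hi ih =>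
    simp_rw [Finset.sum_insert hi]
    exact (hf i (t.mem_insert_self i)).add (ih fun j hj => hf j (Finset.mem_insert_of_mem hj))

section EdgeSums

variable {ι : Type*} (E : Finset (ι × ι)) (a : ι × ι → ℝ)

def edgeProductSum (x : ι → ℝ) : ℝ := ∑ e ∈ E, a e * x e.1 * x e.2

def edgeMinSum (x : ι → ℝ) : ℝ := ∑ e ∈ E, a e * min (x e.1) (x e.2)

def cubeGraph (f : (ι → ℝ) → ℝ) : Set ((ι → ℝ) × ℝ) :=
  {p | (∀ i, p.1 i = 0 ∨ p.1 i = 1) ∧ p.2 = f p.1}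

variable {E a}

theorem edgeMinSum_eq_edgeProductSum {x : ι → ℝ} (hx : ∀ i, x i = 0 ∨ x i = 1) :
    edgeMinSum E a x = edgeProductSum E a x := by
  refine Finset.sum_congr rfl fun e _ => ?_
  rcases hx e.1 with h₁ | h₁ <;> rcases hx e.2 with h₂ | h₂ <;> simp [h₁, h₂]

theorem concaveOn_edgeMinSum (ha : ∀ e ∈ E, 0 ≤ a e) : ConcaveOn ℝ univ (edgeMinSum E a) := by
  refine ConcaveOn.finset_sum convex_univ fun e he => ?_
  have hproj : ∀ i : ι, ConcaveOn ℝ univ fun x : ι → ℝ => x i := fun i =>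
    (LinearMap.proj i : (ι → ℝ) →ₗ[ℝ] ℝ).concaveOn convex_univ
  exact ((hproj e.1).inf (hproj e.2)).smul (ha e he)

theorem convexHull_cubeGraph_subset_hypograph {f g : (ι → ℝ) → ℝ} (hg : ConcaveOn ℝ univ g)
    (hfg : ∀ x : ι → ℝ, (∀ i, x i = 0 ∨ x i = 1) → f x ≤ g x) :
    convexHull ℝ (cubeGraph f) ⊆ {p | p.2 ≤ g p.1} := by
  have := convexHull_min (s := cubeGraph f) (t := {p | p.1 ∈ univ ∧ p.2 ≤ g p.1})
    (fun p hp => ⟨mem_univ _, hp.2 ▸ hfg p.1 hp.1⟩) hg.convex_hypograph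
  simpa using this

theorem edgeMinSum_smul {t : ℝ} (ht : 0 ≤ t) (x : ι → ℝ) :
    edgeMinSum E a (t • x) = t * edgeMinSum E a x := by
  simp only [edgeMinSum, Finset.mul_sum, Pi.smul_apply, smul_eq_mul, ← mul_min_of_nonneg _ _ ht]
  exact Finset.sum_congr rfl fun e _ => by ring

theorem edgeMinSum_add_smul_of_le {x u y : ι → ℝ} {c : ℝ} (hc₀ : 0 ≤ c) (hc₁ : c ≤ 1)
    (hu : ∀ i, (x i = 0 ∧ u i = 0) ∨ (c ≤ x i ∧ u i = 1)) (hxy : x = c • u + (1 - c) • y) :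
    edgeMinSum E a x = c * edgeMinSum E a u + (1 - c) * edgeMinSum E a y := by
  have hpeel : edgeMinSum E a x = c * edgeMinSum E a u + edgeMinSum E a (x - c • u) := by
    simp only [edgeMinSum, Finset.mul_sum, ← Finset.sum_add_distrib]
    refine Finset.sum_congr rfl fun e _ => ?_
    have hmin : ∀ i j,
        min (x i) (x j) = c * min (u i) (u j) + min (x i - c * u i) (x j - c * u j) := by
      intro i j
      rcases hu i with ⟨hi, ki⟩ | ⟨hi, ki⟩ <;> rcases hu j with ⟨hj, kj⟩ | ⟨hj, kj⟩
      · simp [hi, ki, hj, kj]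
      · simp [hi, ki, kj, hc₀.trans hj, sub_nonneg.2 hj]
      · simp [hj, ki, kj, hc₀.trans hi, sub_nonneg.2 hi]
      · rw [ki, kj, mul_one, min_self, mul_one, min_sub_sub_right]; ring
    simp only [Pi.sub_apply, Pi.smul_apply, smul_eq_mul, hmin]
    ring
  rw [hpeel, hxy, add_sub_cancel_left, edgeMinSum_smul (by linarith)]

theorem exists_eq_smul_add_smul_of_not_boolean [Fintype ι] {x : ι → ℝ}
    (hx : ∀ i, x i ∈ Icc (0 : ℝ) 1) (hx01 : ¬∀ i, x i = 0 ∨ x i = 1) :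
    ∃ (c : ℝ) (u y : ι → ℝ), 0 < c ∧ c < 1 ∧ (∀ i, (x i = 0 ∧ u i = 0) ∨ (c ≤ x i ∧ u i = 1)) ∧
      (∀ i, y i ∈ Icc (0 : ℝ) 1) ∧ #{i | 0 < y i} < #{i | 0 < x i} ∧
      x = c • u + (1 - c) • y := by
  push Not at hx01
  obtain ⟨i₀, hi₀, hi₀'⟩ := hx01
  have hpos : 0 < x i₀ := (hx i₀).1.lt_of_ne' hi₀
  obtain ⟨m, hm, hmin⟩ := Finset.exists_min_image {i | 0 < x i} x ⟨i₀, by simpa using hpos⟩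
  simp only [Finset.mem_filter, Finset.mem_univ, true_and] at hm hmin
  set c := x m
  have hc : c < 1 := (hmin i₀ hpos).trans_lt ((hx i₀).2.lt_of_ne hi₀')
  have hc' : 0 < 1 - c := sub_pos.2 hc
  set u : ι → ℝ := fun i => if 0 < x i then 1 else 0
  set y : ι → ℝ := (1 - c)⁻¹ • (x - c • u)
  have hy_apply : ∀ i, y i = if 0 < x i then (x i - c) / (1 - c) else 0 := by
    intro i
    by_cases h : 0 < x i
    · simp [y, u, h, div_eq_inv_mul]
    · simp [y, u, le_antisymm (not_lt.1 h) (hx i).1]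
  refine ⟨c, u, y, hm, hc, fun i => ?_, fun i => ?_, ?_, ?_⟩
  · by_cases h : 0 < x i
    · exact Or.inr ⟨hmin i h, if_pos h⟩
    · exact Or.inl ⟨le_antisymm (not_lt.1 h) (hx i).1, if_neg h⟩
  · rw [hy_apply]
    split_ifs with h
    · exact ⟨div_nonneg (sub_nonneg.2 (hmin i h)) hc'.le,
        (div_le_one hc').2 (by linarith [(hx i).2])⟩
    · exact ⟨le_rfl, zero_le_one⟩
  · refine Finset.card_lt_card (Finset.ssubset_iff_of_subset ?_ |>.2 ⟨m, ?_, ?_⟩)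
    · intro i
      simp only [Finset.mem_filter, Finset.mem_univ, true_and, hy_apply]
      split_ifs with h <;> simp [h]
    · simpa using hm
    · simp [hy_apply, hm, c]
  · funext i
    simp only [Pi.add_apply, Pi.smul_apply, smul_eq_mul, hy_apply]
    split_ifs with h
    · simp only [u, if_pos h]
      field_simp
      ring
    · simp [u, le_antisymm (not_lt.1 h) (hx i).1]

theorem mem_convexHull_cubeGraph_edgeMinSum [Fintype ι] {x : ι → ℝ}
    (hx : ∀ i, x i ∈ Icc (0 : ℝ) 1) :
    (x, edgeMinSum E a x) ∈ convexHull ℝ (cubeGraph (edgeProductSum E a)) := by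
  induction hk : #{i | 0 < x i} using Nat.strong_induction_on generalizing x with
  | _ k ih =>
    by_cases hx01 : ∀ i, x i = 0 ∨ x i = 1
    · exact subset_convexHull ℝ _ ⟨hx01, edgeMinSum_eq_edgeProductSum hx01⟩
    obtain ⟨c, u, y, hc₀, hc₁, hu, hy, hcard, hxy⟩ := exists_eq_smul_add_smul_of_not_boolean hx hx01
    have hu01 : ∀ i, u i = 0 ∨ u i = 1 := fun i => (hu i).imp And.right And.right
    have hvertex : (u, edgeMinSum E a u) ∈ convexHull ℝ (cubeGraph (edgeProductSum E a)) :=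
      subset_convexHull ℝ _ ⟨hu01, edgeMinSum_eq_edgeProductSum hu01⟩
    have hsplit : (x, edgeMinSum E a x) =
        c • (u, edgeMinSum E a u) + (1 - c) • (y, edgeMinSum E a y) := by
      rw [edgeMinSum_add_smul_of_le hc₀.le hc₁.le hu hxy, hxy]
      simp [← hxy]
    rw [hsplit]
    exact convex_convexHull ℝ _ hvertex (ih _ (hk ▸ hcard) hy rfl) hc₀.le (by linarith) (by ring)

end EdgeSums

theorem stmt2_general (n : ℕ) (E : Finset (Fin n × Fin n))
    (a : Fin n × Fin n → ℝ) (ha : ∀ e ∈ E, 0 < a e)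
    (x : Fin n → ℝ) (hx : ∀ i, x i ∈ Set.Icc (0:ℝ) 1) :
    sSup {z : ℝ | (x, z) ∈ convexHull ℝ
        {p : (Fin n → ℝ) × ℝ | (∀ i, p.1 i = 0 ∨ p.1 i = 1) ∧
          p.2 = ∑ e ∈ E, a e * p.1 e.1 * p.1 e.2}}
      = ∑ e ∈ E, a e * min (x e.1) (x e.2) := by
  refine IsGreatest.csSup_eq ⟨mem_convexHull_cubeGraph_edgeMinSum hx, fun z hz => ?_⟩
  exact convexHull_cubeGraph_subset_hypograph (concaveOn_edgeMinSum fun e he => (ha e he).le)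
    (fun v hv => (edgeMinSum_eq_edgeProductSum hv).ge) hz

/-- If all edge weights of the bilinear function `f(x) = ∑_{ij ∈ E} a_{ij} x_i x_j`
are positive, then its concave envelope over `[0,1]^n` is
`cav[f](x) = ∑_{ij ∈ E} a_{ij} min{x_i, x_j}`. -/
theorem stmt2 (n : ℕ) (E : Finset (Fin n × Fin n)) (hE : ∀ e ∈ E, e.1 < e.2)
    (a : Fin n × Fin n → ℝ) (ha : ∀ e ∈ E, 0 < a e)
    (x : Fin n → ℝ) (hx : ∀ i, x i ∈ Set.Icc (0:ℝ) 1) :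
    sSup {z : ℝ | (x, z) ∈ convexHull ℝ
        {p : (Fin n → ℝ) × ℝ | (∀ i, p.1 i = 0 ∨ p.1 i = 1) ∧
          p.2 = ∑ e ∈ E, a e * p.1 e.1 * p.1 e.2}}
      = ∑ e ∈ E, a e * min (x e.1) (x e.2) :=
  stmt2_general n E a ha x hx
end

section
/- For f(x) = Σ_{1≤i<j≤n} x_i x_j and x ∈ [0,1]^n with s = ⌊x_1 + ... + x_n⌋, the convex envelope of f over [0,1]^n at x equals s(x_1 + ... + x_n) − s(s+1)/2. -/
/-! For an integer `s`, the affine function `ℓ_s(ξ) = s·Σξ − s(s+1)/2` (`envelopePiece s`)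
satisfies `2(f − ℓ_s)(ξ) = (k − s)(k − s − 1)` at a binary point `ξ` with `Σξ = k`. This is
nonnegative, so `ℓ_s` minorizes `f` at all vertices of the cube and hence on the whole convex
hull of the graph; and it vanishes when `k ∈ {s, s + 1}`.

For `s = ⌊Σx⌋` the point `x` lies in the slab `[0,1]^n ∩ {s ≤ Σ ≤ s + 1}`. A point of the slab
with a fractional coordinate `i` can be moved both ways along `e_i − e_j` (if some other `x_j` is
fractional) or along `e_i` (otherwise `Σx` is not an integer), so the extreme points of the slab
are binary. By Krein–Milman `x` is a convex combination of binary points with `Σ ∈ {s, s + 1}`,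
where `f = ℓ_s`, so `(x, ℓ_s x)` lies in the hull of the graph. -/

open Set Finset

section CliqueForm

variable {ι R : Type*} [Fintype ι] [LinearOrder ι] [CommRing R]

def cliqueForm (x : ι → R) : R :=
  ∑ i, ∑ j, if i < j then x i * x j else 0

theorem two_mul_cliqueForm (x : ι → R) :
    2 * cliqueForm x = (∑ i, x i) ^ 2 - ∑ i, x i ^ 2 := by
  have hsplit : ∀ i j, x i * x j = (if i < j then x i * x j else 0)
      + (if j < i then x j * x i else 0) + (if i = j then x i ^ 2 else 0) := by
    intro i j
    rcases lt_trichotomy i j with h | rfl | h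
    · simp [h, h.not_gt, h.ne]
    · simp [sq]
    · simp [h, h.not_gt, h.ne', mul_comm]
  have hsq : (∑ i, x i) ^ 2 = 2 * cliqueForm x + ∑ i, x i ^ 2 := by
    rw [sq, sum_mul_sum, sum_congr rfl fun i _ => sum_congr rfl fun j _ => hsplit i j]
    simp only [sum_add_distrib, Fintype.sum_ite_eq]
    rw [sum_comm (f := fun i j => if j < i then x j * x i else 0), cliqueForm]
    ring
  rw [hsq]
  ring

end CliqueForm

def binaryPoints (ι : Type*) : Set (ι → ℝ) :=
  {ξ | ∀ i, ξ i = 0 ∨ ξ i = 1}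

theorem finite_binaryPoints (ι : Type*) [Finite ι] : (binaryPoints ι).Finite := by
  have : binaryPoints ι = Set.pi univ fun _ => {0, 1} := by
    ext ξ
    simp [binaryPoints]
  rw [this]
  exact Set.Finite.pi fun _ => toFinite _

theorem exists_sum_eq_intCast {ι : Type*} {t : Finset ι} {ξ : ι → ℝ}
    (hξ : ∀ i ∈ t, ξ i = 0 ∨ ξ i = 1) : ∃ m : ℤ, ∑ i ∈ t, ξ i = m := by
  refine sum_induction ξ (fun r => ∃ m : ℤ, r = m) ?_ ⟨0, by simp⟩ ?_
  · rintro _ _ ⟨a, rfl⟩ ⟨b, rfl⟩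
    exact ⟨a + b, by push_cast; rfl⟩
  · intro i hi
    rcases hξ i hi with h | h
    · exact ⟨0, by simp [h]⟩
    · exact ⟨1, by simp [h]⟩

theorem intCast_mul_sub_one_nonneg (m : ℤ) : 0 ≤ (m : ℝ) * (m - 1) := by
  have : (0 : ℤ) ≤ m * (m - 1) := by
    rcases le_or_gt m 0 with h | h <;> nlinarith
  exact_mod_cast this

section Envelope

variable {ι : Type*} [Fintype ι]

noncomputable def envelopePiece (s : ℝ) (x : ι → ℝ) : ℝ :=
  s * ∑ i, x i - s * (s + 1) / 2

theorem envelopePiece_add (s : ℝ) {a b : ℝ} (hab : a + b = 1) (x y : ι → ℝ) :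
    envelopePiece s (a • x + b • y) = a * envelopePiece s x + b * envelopePiece s y := by
  simp only [envelopePiece, Pi.add_apply, Pi.smul_apply, smul_eq_mul, sum_add_distrib, ← mul_sum]
  linear_combination (s * (s + 1) / 2) * hab

theorem two_mul_cliqueForm_sub_envelopePiece [LinearOrder ι] {ξ : ι → ℝ}
    (hξ : ξ ∈ binaryPoints ι) (s : ℝ) :
    2 * (cliqueForm ξ - envelopePiece s ξ) = (∑ i, ξ i - s) * (∑ i, ξ i - s - 1) := by
  have hsq : ∑ i, ξ i ^ 2 = ∑ i, ξ i :=
    sum_congr rfl fun i _ => by rcases hξ i with h | h <;> simp [h]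
  rw [mul_sub, two_mul_cliqueForm, hsq, envelopePiece]
  ring

theorem envelopePiece_le_cliqueForm [LinearOrder ι] {ξ : ι → ℝ} (hξ : ξ ∈ binaryPoints ι)
    (s : ℤ) : envelopePiece s ξ ≤ cliqueForm ξ := by
  obtain ⟨m, hm⟩ := exists_sum_eq_intCast (t := Finset.univ) fun i _ => hξ i
  have h := two_mul_cliqueForm_sub_envelopePiece hξ s
  have := intCast_mul_sub_one_nonneg (m - s)
  push_cast at this
  rw [hm] at h
  linarith

theorem cliqueForm_eq_envelopePiece [LinearOrder ι] {ξ : ι → ℝ} (hξ : ξ ∈ binaryPoints ι)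
    {s : ℤ} (hs : ∑ i, ξ i ∈ Set.Icc (s : ℝ) (s + 1)) : cliqueForm ξ = envelopePiece s ξ := by
  obtain ⟨m, hm⟩ := exists_sum_eq_intCast (t := Finset.univ) fun i _ => hξ i
  have h := two_mul_cliqueForm_sub_envelopePiece hξ s
  have := intCast_mul_sub_one_nonneg (m - s)
  push_cast at this
  rw [hm] at h hs
  nlinarith [hs.1, hs.2]

theorem convex_setOf_envelopePiece_mem {C : Set ((ι → ℝ) × ℝ)} (hC : Convex ℝ C) (s : ℝ) :
    Convex ℝ {x | (x, envelopePiece s x) ∈ C} := by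
  intro x hx y hy a b ha hb hab
  convert hC hx hy ha hb hab using 1
  simp [envelopePiece_add s hab]

end Envelope

def binaryGraph (ι : Type*) [Fintype ι] [LinearOrder ι] : Set ((ι → ℝ) × ℝ) :=
  {p | p.1 ∈ binaryPoints ι ∧ p.2 = cliqueForm p.1}

theorem convexHull_binaryGraph_subset {ι : Type*} [Fintype ι] [LinearOrder ι] (s : ℤ) :
    convexHull ℝ (binaryGraph ι) ⊆ {p | envelopePiece s p.1 ≤ p.2} := by
  refine convexHull_min (fun p ⟨hp, hf⟩ => ?_) ?_
  · rw [mem_ofPred_eq, hf]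
    exact envelopePiece_le_cliqueForm hp s
  intro p hp q hq a b ha hb hab
  simp only [mem_ofPred_eq, Prod.fst_add, Prod.smul_fst, Prod.snd_add, Prod.smul_snd,
    smul_eq_mul, envelopePiece_add _ hab] at *
  exact add_le_add (mul_le_mul_of_nonneg_left hp ha) (mul_le_mul_of_nonneg_left hq hb)

theorem notMem_extremePoints_of_add_mem_of_sub_mem {𝕜 E : Type*} [Field 𝕜] [LinearOrder 𝕜]
    [IsStrictOrderedRing 𝕜] [AddCommGroup E] [Module 𝕜 E] {A : Set E} {x v : E} (hv : v ≠ 0)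
    (hadd : x + v ∈ A) (hsub : x - v ∈ A) : x ∉ A.extremePoints 𝕜 := by
  intro hx
  have hmid : x ∈ openSegment 𝕜 (x - v) (x + v) :=
    ⟨1 / 2, 1 / 2, by norm_num, by norm_num, by norm_num, by module⟩
  exact hv (sub_eq_self.mp ((mem_extremePoints.mp hx).2 _ hsub _ hadd hmid).1)

section CubeSlab

variable {ι : Type*} [Fintype ι]

def cubeSlab (s : ℝ) : Set (ι → ℝ) :=
  {x | (∀ i, x i ∈ Set.Icc 0 1) ∧ ∑ i, x i ∈ Set.Icc s (s + 1)}

theorem cubeSlab_eq (s : ℝ) :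
    cubeSlab s =
      Set.pi univ (fun _ : ι => Set.Icc 0 1) ∩ (fun x => ∑ i, x i) ⁻¹' Set.Icc s (s + 1) := by
  ext x
  simp only [Set.mem_inter_iff, Set.mem_univ_pi, Set.mem_preimage]
  rfl

theorem convex_cubeSlab (s : ℝ) : Convex ℝ (cubeSlab (ι := ι) s) := by
  rw [cubeSlab_eq]
  refine (convex_pi fun _ _ => convex_Icc 0 1).inter ((convex_Icc _ _).is_linear_preimage ?_)
  exact ⟨fun x y => by simp [sum_add_distrib], fun c x => by simp [mul_sum]⟩

theorem isCompact_cubeSlab (s : ℝ) : IsCompact (cubeSlab (ι := ι) s) := by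
  rw [cubeSlab_eq]
  exact (isCompact_univ_pi fun _ => isCompact_Icc).inter_right
    (isClosed_Icc.preimage (continuous_finsetSum _ fun i _ => continuous_apply i))

theorem add_mem_cubeSlab {s : ℝ} {x v : ι → ℝ} (hv : ∀ i, |v i| ≤ min (x i) (1 - x i))
    (hsum : |∑ i, v i| ≤ min (∑ i, x i - s) (s + 1 - ∑ i, x i)) : x + v ∈ cubeSlab s := by
  refine ⟨fun i => ?_, ?_⟩
  · have := abs_le.mp ((hv i).trans (min_le_left _ _))
    have := abs_le.mp ((hv i).trans (min_le_right _ _))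
    simp only [Pi.add_apply, Set.mem_Icc]
    constructor <;> linarith
  · have := abs_le.mp (hsum.trans (min_le_left _ _))
    have := abs_le.mp (hsum.trans (min_le_right _ _))
    simp only [Pi.add_apply, sum_add_distrib, Set.mem_Icc]
    constructor <;> linarith

theorem notMem_extremePoints_cubeSlab {s : ℝ} {x v : ι → ℝ} (hv₀ : v ≠ 0)
    (hv : ∀ i, |v i| ≤ min (x i) (1 - x i))
    (hsum : |∑ i, v i| ≤ min (∑ i, x i - s) (s + 1 - ∑ i, x i)) :
    x ∉ (cubeSlab s).extremePoints ℝ := by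
  refine notMem_extremePoints_of_add_mem_of_sub_mem hv₀ (add_mem_cubeSlab hv hsum) ?_
  rw [sub_eq_add_neg]
  exact add_mem_cubeSlab (by simpa using hv) (by simpa [sum_neg_distrib] using hsum)

variable [DecidableEq ι]

theorem notMem_extremePoints_cubeSlab_of_two_fractional {s : ℝ} {x : ι → ℝ}
    (hx : x ∈ cubeSlab s) {i j : ι} (hij : i ≠ j) (hi : x i ∈ Set.Ioo 0 1)
    (hj : x j ∈ Set.Ioo 0 1) : x ∉ (cubeSlab s).extremePoints ℝ := by
  set ε := min (min (x i) (1 - x i)) (min (x j) (1 - x j))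
  have hε : 0 < ε := by
    simp only [ε, lt_min_iff, sub_pos]
    exact ⟨⟨hi.1, hi.2⟩, hj.1, hj.2⟩
  refine notMem_extremePoints_cubeSlab (v := Pi.single i ε - Pi.single j ε) ?_ (fun k => ?_) ?_
  · intro h
    simpa [hij, hε.ne'] using congr_fun h i
  · rcases eq_or_ne k i with rfl | hki
    · simp [hij, abs_of_pos hε, ε]
    rcases eq_or_ne k j with rfl | hkj
    · simp [hki, abs_of_pos hε, ε]
    · simp [hki, hkj, (hx.1 k).1, (hx.1 k).2]
  · simp [hx.2.1, hx.2.2]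

theorem notMem_extremePoints_cubeSlab_of_sum_mem_Ioo {s : ℝ} {x : ι → ℝ}
    (hx : x ∈ cubeSlab s) {i : ι} (hi : x i ∈ Set.Ioo 0 1)
    (hsum : ∑ k, x k ∈ Set.Ioo s (s + 1)) : x ∉ (cubeSlab s).extremePoints ℝ := by
  set ε := min (min (x i) (1 - x i)) (min (∑ k, x k - s) (s + 1 - ∑ k, x k))
  have hε : 0 < ε := by
    simp only [ε, lt_min_iff, sub_pos]
    exact ⟨⟨hi.1, hi.2⟩, hsum.1, hsum.2⟩
  refine notMem_extremePoints_cubeSlab (v := Pi.single i ε) ?_ (fun k => ?_) ?_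
  · simpa using hε.ne'
  · rcases eq_or_ne k i with rfl | hki
    · simp [abs_of_pos hε, ε]
    · simp [hki, (hx.1 k).1, (hx.1 k).2]
  · simp [abs_of_pos hε, ε]

theorem sum_ne_intCast_of_forall_ne_binary {x : ι → ℝ} {i : ι} (hi : x i ∈ Set.Ioo 0 1)
    (hbin : ∀ j ≠ i, x j = 0 ∨ x j = 1) (m : ℤ) : ∑ j, x j ≠ m := by
  obtain ⟨k, hk⟩ :=
    exists_sum_eq_intCast (t := univ.erase i) fun j hj => hbin j (ne_of_mem_erase hj)
  rw [← add_sum_erase _ _ (mem_univ i), hk]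
  intro h
  have hxi : x i = ((m - k : ℤ) : ℝ) := by push_cast; linarith
  obtain ⟨h0, h1⟩ := hxi ▸ hi
  norm_cast at h0 h1
  omega

theorem extremePoints_cubeSlab_subset (s : ℤ) :
    (cubeSlab (s : ℝ)).extremePoints ℝ ⊆ binaryPoints ι := by
  intro x hx
  have hslab := hx.1
  by_contra hnb
  simp only [binaryPoints, mem_ofPred_eq, not_forall, not_or] at hnb
  obtain ⟨i, hi0, hi1⟩ := hnb
  have hi : x i ∈ Set.Ioo 0 1 := ⟨(hslab.1 i).1.lt_of_ne' hi0, (hslab.1 i).2.lt_of_ne hi1⟩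
  by_cases hbin : ∀ j ≠ i, x j = 0 ∨ x j = 1
  · have hne := sum_ne_intCast_of_forall_ne_binary hi hbin
    have hsum : ∑ k, x k ∈ Set.Ioo (s : ℝ) (s + 1) :=
      ⟨hslab.2.1.lt_of_ne' (hne s), hslab.2.2.lt_of_ne (by exact_mod_cast hne (s + 1))⟩
    exact notMem_extremePoints_cubeSlab_of_sum_mem_Ioo hslab hi hsum hx
  · simp only [not_forall, not_or] at hbin
    obtain ⟨j, hji, hj0, hj1⟩ := hbin
    have hj : x j ∈ Set.Ioo 0 1 := ⟨(hslab.1 j).1.lt_of_ne' hj0, (hslab.1 j).2.lt_of_ne hj1⟩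
    exact notMem_extremePoints_cubeSlab_of_two_fractional hslab hji.symm hi hj hx

theorem cubeSlab_subset_convexHull (s : ℤ) :
    cubeSlab (s : ℝ) ⊆ convexHull ℝ (cubeSlab (s : ℝ) ∩ binaryPoints ι) :=
  calc cubeSlab (s : ℝ)
      = closure (convexHull ℝ ((cubeSlab (s : ℝ)).extremePoints ℝ)) :=
        (closure_convexHull_extremePoints (isCompact_cubeSlab _) (convex_cubeSlab _)).symm
    _ ⊆ closure (convexHull ℝ (cubeSlab (s : ℝ) ∩ binaryPoints ι)) :=
        closure_mono (convexHull_mono (subset_inter (extremePoints_subset (𝕜 := ℝ))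
          (extremePoints_cubeSlab_subset s)))
    _ = convexHull ℝ (cubeSlab (s : ℝ) ∩ binaryPoints ι) :=
        (((finite_binaryPoints ι).inter_of_right _).isCompact_convexHull ℝ).isClosed.closure_eq

end CubeSlab

theorem mem_convexHull_binaryGraph {ι : Type*} [Fintype ι] [LinearOrder ι] {s : ℤ}
    {x : ι → ℝ} (hx : x ∈ cubeSlab (s : ℝ)) :
    (x, envelopePiece s x) ∈ convexHull ℝ (binaryGraph ι) := by
  have hvertices : cubeSlab (s : ℝ) ∩ binaryPoints ι ⊆
      {ξ | (ξ, envelopePiece s ξ) ∈ convexHull ℝ (binaryGraph ι)} := fun ξ ⟨hslab, hbin⟩ =>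
    subset_convexHull ℝ _ ⟨hbin, (cliqueForm_eq_envelopePiece hbin hslab.2).symm⟩
  exact convexHull_min hvertices (convex_setOf_envelopePiece_mem (convex_convexHull ℝ _) s)
    (cubeSlab_subset_convexHull s hx)

/-- For `f(x) = ∑_{i<j} x_i x_j` and `x ∈ [0,1]^n` with `s = ⌊x_1 + ⋯ + x_n⌋`,
the convex envelope of `f` over `[0,1]^n` at `x` equals
`s(x_1 + ⋯ + x_n) − s(s+1)/2`. -/
theorem stmt3 (n : ℕ) (x : Fin n → ℝ) (hx : ∀ i, x i ∈ Set.Icc (0:ℝ) 1) :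
    sInf {z : ℝ | (x, z) ∈ convexHull ℝ
        {p : (Fin n → ℝ) × ℝ | (∀ i, p.1 i = 0 ∨ p.1 i = 1) ∧
          p.2 = ∑ i, ∑ j, if i < j then p.1 i * p.1 j else 0}}
      = (⌊∑ i, x i⌋ : ℝ) * (∑ i, x i)
        - (⌊∑ i, x i⌋ : ℝ) * ((⌊∑ i, x i⌋ : ℝ) + 1) / 2 := by
  have hslab : x ∈ cubeSlab (⌊∑ i, x i⌋ : ℝ) :=
    ⟨hx, Int.floor_le _, (Int.lt_floor_add_one _).le⟩
  exact IsLeast.csInf_eq ⟨mem_convexHull_binaryGraph hslab,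
    fun z hz => convexHull_binaryGraph_subset ⌊∑ i, x i⌋ hz⟩
end

section
/- For any subset S of vertices with |S| ≥ 3 and any integer α with 1 ≤ α ≤ |S| − 2, the clique inequality α·Σ_{i∈S} x_i − Σ_{i<j, i,j∈S} y_{ij} ≤ α(α+1)/2 holds for all binary x ∈ {0,1}^n with y_{ij} = x_i x_j, and hence is valid for the Boolean Quadric Polytope. -/
/-!
At a binary point with `k` ones in `S`, the left-hand side is `α k - k (k - 1) / 2`, and
`α (α + 1) - 2 α k + k (k - 1) = (k - α) (k - α - 1)` is a product of consecutive integers,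
hence nonnegative.
-/

open Finset

theorem two_mul_sum_ite_lt_mul {ι R : Type*} [LinearOrder ι] [CommRing R]
    (S : Finset ι) (x : ι → R) :
    2 * ∑ i ∈ S, ∑ j ∈ S, (if i < j then x i * x j else 0)
      = (∑ i ∈ S, x i) ^ 2 - ∑ i ∈ S, x i ^ 2 := by
  set A : ι → ι → R := fun i j => if i < j then x i * x j else 0
  have hdiag : ∑ i ∈ S, x i ^ 2 = ∑ i ∈ S, ∑ j ∈ S, if i = j then x i * x j else 0 := by
    simp [sq]
  have hsplit : (∑ i ∈ S, x i) ^ 2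
      = ∑ i ∈ S, ∑ j ∈ S, A i j + ∑ i ∈ S, ∑ j ∈ S, A j i + ∑ i ∈ S, x i ^ 2 := by
    rw [hdiag, sq, sum_mul_sum, ← sum_add_distrib, ← sum_add_distrib]
    refine sum_congr rfl fun i _ => ?_
    rw [← sum_add_distrib, ← sum_add_distrib]
    refine sum_congr rfl fun j _ => ?_
    rcases lt_trichotomy i j with h | rfl | h
    · simp [A, h, h.not_gt, h.ne]
    · simp [A]
    · simp [A, h, h.not_gt, h.ne', mul_comm]
  rw [hsplit, sum_comm (f := fun i j => A j i)]
  ring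

theorem sum_eq_card_filter_of_binary {ι : Type*} (S : Finset ι) (x : ι → ℝ)
    (hx : ∀ a, x a = 0 ∨ x a = 1) :
    ∑ i ∈ S, x i = #{i ∈ S | x i = 1} := by
  classical
  rw [← sum_boole]
  refine sum_congr rfl fun i _ => ?_
  rcases hx i with h | h <;> simp [h]

theorem stmt10_general (n : ℕ) (S : Finset (Fin n)) (α : ℕ)
    (x : Fin n → ℝ) (hx : ∀ a, x a = 0 ∨ x a = 1) :
    (α : ℝ) * (∑ i ∈ S, x i) - (∑ i ∈ S, ∑ j ∈ S, if i < j then x i * x j else 0)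
      ≤ (α : ℝ) * ((α : ℝ) + 1) / 2 := by
  set k : ℕ := #{i ∈ S | x i = 1}
  have hsum : ∑ i ∈ S, x i = k := sum_eq_card_filter_of_binary S x hx
  have hsq : ∑ i ∈ S, x i ^ 2 = k := by
    rw [← hsum]
    exact sum_congr rfl fun i _ => by rcases hx i with h | h <;> simp [h]
  have hpairs := two_mul_sum_ite_lt_mul S x
  rw [hsum, hsq] at hpairs
  have hconsec : ((k : ℝ) - α) ≤ ((k : ℝ) - α) ^ 2 := by
    exact_mod_cast Int.le_self_sq ((k : ℤ) - α)
  rw [hsum]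
  linarith

/-- Padberg's clique inequality: for `S` with `|S| ≥ 3` and an integer `α` with
`1 ≤ α ≤ |S| − 2`, the inequality `α·∑_{i∈S} x_i − ∑_{i<j ∈ S} x_i x_j ≤ α(α+1)/2`
holds at every binary point. -/
theorem stmt10 (n : ℕ) (S : Finset (Fin n)) (hS : 3 ≤ S.card)
    (α : ℕ) (hα1 : 1 ≤ α) (hα2 : α ≤ S.card - 2)
    (x : Fin n → ℝ) (hx : ∀ a, x a = 0 ∨ x a = 1) :
    (α : ℝ) * (∑ i ∈ S, x i) - (∑ i ∈ S, ∑ j ∈ S, if i < j then x i * x j else 0)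
      ≤ (α : ℝ) * ((α : ℝ) + 1) / 2 :=
  stmt10_general n S α x hx
end

section
/- For disjoint vertex subsets S and T with |S| ≥ 1 and |T| ≥ 2, the cut inequality −Σ_{i∈S} x_i − Σ_{ij∈E(S)} y_{ij} + Σ_{ij∈E(S:T)} y_{ij} − Σ_{ij∈E(T)} y_{ij} ≤ 0 holds for all binary x with y_{ij} = x_i x_j, where E(S) denotes the pairs within S and E(S:T) the pairs with one endpoint in each of S and T. -/
/-! With `a = ∑_{i∈S} x_i` and `b = ∑_{j∈T} x_j`, a binary point has `x_i x_i = x_i`, so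
`∑_{i<j∈S} x_i x_j = (a² - a)/2`, likewise for `T`, and the cross term is `a b`. The left-hand
side therefore equals `-(a - b)(a - b + 1)/2`, which is nonpositive because `a - b` is an
integer. -/

open Finset

section SumSq

variable {ι R : Type*} [LinearOrder ι] [CommRing R]

theorem Finset.sq_sum_eq_two_mul_sum_lt_add (A : Finset ι) (x : ι → R) :
    (∑ i ∈ A, x i) ^ 2 =
      2 * (∑ i ∈ A, ∑ j ∈ A, if i < j then x i * x j else 0) + ∑ i ∈ A, x i * x i := by
  have hsplit : ∀ i j, x i * x j = (if i < j then x i * x j else 0)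
      + (if j < i then x j * x i else 0) + (if i = j then x i * x j else 0) := by
    intro i j
    rcases lt_trichotomy i j with h | rfl | h
    · simp [h, h.not_gt, h.ne]
    · simp
    · simp [h, h.not_gt, h.ne', mul_comm]
  have hdiag : (∑ i ∈ A, ∑ j ∈ A, if i = j then x i * x j else 0) = ∑ i ∈ A, x i * x i :=
    sum_congr rfl fun i hi => by rw [sum_ite_eq, if_pos hi]
  calc (∑ i ∈ A, x i) ^ 2 = ∑ i ∈ A, ∑ j ∈ A, x i * x j := by rw [sq, sum_mul_sum]
    _ = (∑ i ∈ A, ∑ j ∈ A, if i < j then x i * x j else 0)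
        + (∑ i ∈ A, ∑ j ∈ A, if j < i then x j * x i else 0)
        + ∑ i ∈ A, ∑ j ∈ A, if i = j then x i * x j else 0 := by
      simp only [← sum_add_distrib, ← hsplit]
    _ = _ := by rw [sum_comm (f := fun i j => if j < i then x j * x i else 0), hdiag]; ring

end SumSq

section Binary

variable {ι : Type*} {x : ι → ℝ}

theorem sum_mul_self_of_binary (hx : ∀ a, x a = 0 ∨ x a = 1) (A : Finset ι) :
    ∑ i ∈ A, x i * x i = ∑ i ∈ A, x i :=
  sum_congr rfl fun i _ => by rcases hx i with h | h <;> simp [h]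

theorem exists_sum_eq_natCast_of_binary (hx : ∀ a, x a = 0 ∨ x a = 1) (A : Finset ι) :
    ∃ k : ℕ, ∑ i ∈ A, x i = k :=
  ⟨#{i ∈ A | x i = 1}, by
    rw [card_filter, Nat.cast_sum]
    exact sum_congr rfl fun i _ => by rcases hx i with h | h <;> simp [h]⟩

end Binary

theorem Int.mul_add_one_nonneg (z : ℤ) : 0 ≤ z * (z + 1) := by
  rcases le_or_gt 0 z with h | h
  · positivity
  · exact mul_nonneg_of_nonpos_of_nonpos h.le (by omega)

theorem stmt11_general (n : ℕ) (S T : Finset (Fin n))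
    (x : Fin n → ℝ) (hx : ∀ a, x a = 0 ∨ x a = 1) :
    -(∑ i ∈ S, x i) - (∑ i ∈ S, ∑ j ∈ S, if i < j then x i * x j else 0)
      + (∑ i ∈ S, ∑ j ∈ T, x i * x j)
      - (∑ i ∈ T, ∑ j ∈ T, if i < j then x i * x j else 0) ≤ 0 := by
  have hS := S.sq_sum_eq_two_mul_sum_lt_add x
  have hT := T.sq_sum_eq_two_mul_sum_lt_add x
  rw [sum_mul_self_of_binary hx] at hS hT
  rw [← sum_mul_sum]
  obtain ⟨a, ha⟩ := exists_sum_eq_natCast_of_binary hx S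
  obtain ⟨b, hb⟩ := exists_sum_eq_natCast_of_binary hx T
  rw [ha] at hS ⊢
  rw [hb] at hT ⊢
  have hz : (0 : ℝ) ≤ ((a - b : ℤ) : ℝ) * ((a - b : ℤ) + 1) := by
    exact_mod_cast Int.mul_add_one_nonneg (a - b)
  push_cast at hz
  linarith

/-- Padberg's cut inequality: for disjoint `S`, `T` with `|S| ≥ 1`, `|T| ≥ 2`,
`−∑_{i∈S} x_i − ∑_{i<j∈S} x_i x_j + ∑_{i∈S,j∈T} x_i x_j − ∑_{i<j∈T} x_i x_j ≤ 0`
holds at every binary point. -/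
theorem stmt11 (n : ℕ) (S T : Finset (Fin n)) (hST : Disjoint S T)
    (hS : 1 ≤ S.card) (hT : 2 ≤ T.card)
    (x : Fin n → ℝ) (hx : ∀ a, x a = 0 ∨ x a = 1) :
    -(∑ i ∈ S, x i) - (∑ i ∈ S, ∑ j ∈ S, if i < j then x i * x j else 0)
      + (∑ i ∈ S, ∑ j ∈ T, x i * x j)
      - (∑ i ∈ T, ∑ j ∈ T, if i < j then x i * x j else 0) ≤ 0 :=
  stmt11_general n S T x hx
end

section
/- Let C be a cycle (a set of edges forming a cycle) in a graph and D ⊆ C a subset of odd cardinality. Then the odd cycle inequality Σ_{u∈V_0} x_u − Σ_{u∈V_1} x_u + Σ_{e∈C\D} y_e − Σ_{e∈D} y_e ≤ (|D|−1)/2 holds for all binary x with y_{ij} = x_i x_j, where V_0 is the set of vertices incident to two edges of D and V_1 the set of vertices incident to two edges of C\D. -/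
/-!
Put `s i = 1` for `i ∈ D` and `s i = -1` otherwise. Reading a vertex term against the average
`(s (j-1) + s j) / 2` of the signs of its two edges, the left-hand side becomes
`(1/2) ∑ᵢ s i * (xᵢ + xᵢ₊₁ - 2 xᵢ xᵢ₊₁)`, and at a binary point the bracket is the indicator of
`xᵢ ≠ xᵢ₊₁`. So the left-hand side is half of `|N ∩ D| - |N \ D|`, where `N` is the set of edges at
which `x` changes value. Around a cycle `N` has even size; since `|D|` is odd, either `N` leaves
`D` (and `|N \ D| ≥ 1`) or `N ⊊ D`, and either way `|N ∩ D| - |N \ D| ≤ |D| - 1`.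
-/

open Finset

theorem even_card_filter_ne_apply_perm {ι α : Type*} [Fintype ι] [DecidableEq α]
    (f : ι → α) (σ : Equiv.Perm ι) {a b : α} (hf : ∀ i, f i = a ∨ f i = b) :
    Even #{i | f i ≠ f (σ i)} := by
  let c : ι → ZMod 2 := fun i => if f i = a then 0 else 1
  have hc : ∀ i, (if f i ≠ f (σ i) then 1 else 0 : ZMod 2) = c i + c (σ i) := by
    intro i
    rcases hf i with h | h <;> rcases hf (σ i) with h' | h' <;> by_cases hab : b = a <;>
      simp [c, h, h', hab, Ne.symm, CharTwo.add_self_eq_zero]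
  rw [← ZMod.natCast_eq_zero_iff_even, natCast_card_filter, sum_congr rfl fun i _ => hc i,
    sum_add_distrib, Equiv.sum_comp σ c, ← two_mul]
  exact zero_mul _

theorem add_sub_two_mul_eq_ite_ne {R : Type*} [Ring R] [DecidableEq R] {a b : R}
    (ha : a = 0 ∨ a = 1) (hb : b = 0 ∨ b = 1) :
    a + b - 2 * a * b = if a ≠ b then 1 else 0 := by
  rcases ha with rfl | rfl <;> rcases hb with rfl | rfl <;> norm_num [eq_comm (a := (1 : R))]

theorem sum_ite_mem_le_card_sub_one {α : Type*} [DecidableEq α] {D N : Finset α}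
    (hD : Odd #D) (hN : Even #N) :
    ∑ i ∈ N, (if i ∈ D then 1 else -1 : ℝ) ≤ #D - 1 := by
  have key : #(N ∩ D) + 1 ≤ #D + #(N \ D) := by
    rcases (N \ D).eq_empty_or_nonempty with h | h
    · have hND : N ⊆ D := sdiff_eq_empty_iff_subset.mp h
      have hne : #N ≠ #D := fun h => Nat.not_even_iff_odd.mpr hD (h ▸ hN)
      rw [inter_eq_left.mpr hND]
      have := card_le_card hND
      omega
    · have := card_le_card (inter_subset_right (s₁ := N) (s₂ := D))
      have := h.card_pos
      omega
  have key' : (#(N ∩ D) : ℝ) + 1 ≤ #D + #(N \ D) := by exact_mod_cast key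
  rw [sum_ite, sum_const, sum_const, filter_mem_eq_inter, filter_notMem_eq_sdiff]
  simp only [nsmul_eq_mul, mul_one, mul_neg]
  linarith

theorem cycle_inequality_lhs_eq {m : ℕ} [NeZero m] (D : Finset (Fin m)) (a : Fin m → ℝ) :
    (∑ j ∈ Finset.univ.filter (fun j : Fin m => j - 1 ∈ D ∧ j ∈ D), a j)
      - (∑ j ∈ Finset.univ.filter (fun j : Fin m => j - 1 ∉ D ∧ j ∉ D), a j)
      + (∑ i ∈ Finset.univ.filter (fun i : Fin m => i ∉ D), a i * a (i + 1))
      - (∑ i ∈ D, a i * a (i + 1))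
      = (∑ i, (if i ∈ D then 1 else -1) * (a i + a (i + 1) - 2 * a i * a (i + 1))) / 2 := by
  set s : Fin m → ℝ := fun i => if i ∈ D then 1 else -1
  have shift : ∑ i, s i * a (i + 1) = ∑ j, s (j - 1) * a j :=
    ((Equiv.subRight 1).sum_comp _).symm.trans (by simp)
  calc _ = ∑ j, ((if j - 1 ∈ D ∧ j ∈ D then a j else 0) - (if j - 1 ∉ D ∧ j ∉ D then a j else 0)
          + (if j ∉ D then a j * a (j + 1) else 0) - (if j ∈ D then a j * a (j + 1) else 0)) := by
        simp only [sum_filter, sum_sub_distrib, sum_add_distrib, sum_ite_mem, univ_inter]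
    _ = ∑ j, ((s (j - 1) + s j) / 2 * a j - s j * (a j * a (j + 1))) := by
        refine sum_congr rfl fun j _ => ?_
        by_cases h₁ : j - 1 ∈ D <;> by_cases h₂ : j ∈ D <;> simp [s, h₁, h₂]
    _ = (∑ i, (s i * a i - 2 * (s i * (a i * a (i + 1)))) + ∑ j, s (j - 1) * a j) / 2 := by
        rw [← sum_add_distrib, sum_div]
        exact sum_congr rfl fun j _ => by ring
    _ = _ := by
        rw [← shift, ← sum_add_distrib]
        exact congrArg (· / 2) (sum_congr rfl fun i _ => by ring)

/-- Edge `i` of the cycle joins `v i` and `v (i + 1)`, so vertex `v j` lies on edges `j - 1` and `j`. -/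
theorem stmt13_general (n m : ℕ) [NeZero m]
    (v : Fin m → Fin n)
    (D : Finset (Fin m)) (hD : Odd D.card)
    (x : Fin n → ℝ) (hx : ∀ a, x a = 0 ∨ x a = 1) :
    (∑ j ∈ Finset.univ.filter (fun j : Fin m => j - 1 ∈ D ∧ j ∈ D), x (v j))
      - (∑ j ∈ Finset.univ.filter (fun j : Fin m => j - 1 ∉ D ∧ j ∉ D), x (v j))
      + (∑ i ∈ Finset.univ.filter (fun i : Fin m => i ∉ D), x (v i) * x (v (i + 1)))
      - (∑ i ∈ D, x (v i) * x (v (i + 1)))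
      ≤ ((D.card : ℝ) - 1) / 2 := by
  classical
  have hN : Even #{i : Fin m | x (v i) ≠ x (v (i + 1))} :=
    even_card_filter_ne_apply_perm (x ∘ v) (Equiv.addRight 1) fun i => hx (v i)
  calc _ = (∑ i, (if i ∈ D then 1 else -1) * (x (v i) + x (v (i + 1))
          - 2 * x (v i) * x (v (i + 1)))) / 2 := cycle_inequality_lhs_eq D (x ∘ v)
    _ = (∑ i with x (v i) ≠ x (v (i + 1)), (if i ∈ D then 1 else -1 : ℝ)) / 2 := by
        simp only [add_sub_two_mul_eq_ite_ne (hx _) (hx _), mul_ite, mul_one, mul_zero, sum_filter]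
    _ ≤ _ := by gcongr; exact sum_ite_mem_le_card_sub_one hD hN

/-- Padberg's odd cycle inequality: for a cycle with vertices `v 0, …, v (m−1)`
(edge `i` joining `v i` and `v (i+1)`, cyclically) and a set `D` of edges of odd
cardinality, the inequality
`∑_{u∈V₀} x_u − ∑_{u∈V₁} x_u + ∑_{e∉D} y_e − ∑_{e∈D} y_e ≤ (|D|−1)/2`
holds at every binary point with `y_{ij} = x_i x_j`, where `V₀` (resp. `V₁`) consists
of the vertices whose two incident cycle edges both lie in `D` (resp. both outside `D`). -/
theorem stmt13 (n m : ℕ) [NeZero m] (hm : 3 ≤ m)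
    (v : Fin m → Fin n) (hv : Function.Injective v)
    (D : Finset (Fin m)) (hD : Odd D.card)
    (x : Fin n → ℝ) (hx : ∀ a, x a = 0 ∨ x a = 1) :
    (∑ j ∈ Finset.univ.filter (fun j : Fin m => j - 1 ∈ D ∧ j ∈ D), x (v j))
      - (∑ j ∈ Finset.univ.filter (fun j : Fin m => j - 1 ∉ D ∧ j ∉ D), x (v j))
      + (∑ i ∈ Finset.univ.filter (fun i : Fin m => i ∉ D), x (v i) * x (v (i + 1)))
      - (∑ i ∈ D, x (v i) * x (v (i + 1)))
      ≤ ((D.card : ℝ) - 1) / 2 :=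
  stmt13_general n m v D hD x hx
end

section
/- The Boolean Quadric Polytope QP = conv{(x,y) ∈ {0,1}^{n(n+1)/2} : y_{ij} = x_i x_j for all i < j} equals conv{(x,y) ∈ [0,1]^{n(n+1)/2} : y_{ij} = x_i x_j for all i < j}; that is, the convex hull of the quadratic variety restricted to the unit box equals the convex hull of its binary points. -/
open Set

theorem stmt16_aux (n : ℕ) (s : Finset (Fin n)) :
    ∀ x : Fin n → ℝ, (∀ i, x i ∈ Set.Icc (0:ℝ) 1) →
    (∀ i, i ∉ s → x i = 0 ∨ x i = 1) →
    ((x, fun q : {q : Fin n × Fin n // q.1 < q.2} => x q.val.1 * x q.val.2) :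
        (Fin n → ℝ) × ({q : Fin n × Fin n // q.1 < q.2} → ℝ))
      ∈ convexHull ℝ {p : (Fin n → ℝ) × ({q : Fin n × Fin n // q.1 < q.2} → ℝ) |
        (∀ i, p.1 i = 0 ∨ p.1 i = 1) ∧ ∀ q, p.2 q = p.1 q.val.1 * p.1 q.val.2} := by
  classical
  induction s using Finset.induction_on with
  | empty =>
      intro x hx hbin
      exact subset_convexHull ℝ _ ⟨fun i => hbin i (Finset.notMem_empty i), fun q => rfl⟩
  | insert a s ha ih =>
      intro x hx hbin
      set x0 := Function.update x a 0 with hx0def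
      set x1 := Function.update x a 1 with hx1def
      have h0 : ∀ i, x0 i ∈ Set.Icc (0:ℝ) 1 := by
        intro i
        by_cases h : i = a
        · subst h; simp [x0]
        · simpa [x0, Function.update_of_ne h] using hx i
      have h1 : ∀ i, x1 i ∈ Set.Icc (0:ℝ) 1 := by
        intro i
        by_cases h : i = a
        · subst h; simp [x1]
        · simpa [x1, Function.update_of_ne h] using hx i
      have b0 : ∀ i, i ∉ s → x0 i = 0 ∨ x0 i = 1 := by
        intro i hi
        by_cases h : i = a
        · subst h; left; simp [x0]
        · rw [hx0def, Function.update_of_ne h]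
          exact hbin i (by simp [h, hi])
      have b1 : ∀ i, i ∉ s → x1 i = 0 ∨ x1 i = 1 := by
        intro i hi
        by_cases h : i = a
        · subst h; right; simp [x1]
        · rw [hx1def, Function.update_of_ne h]
          exact hbin i (by simp [h, hi])
      have m0 := ih x0 h0 b0
      have m1 := ih x1 h1 b1
      have hxa := hx a
      have key : ((x, fun q : {q : Fin n × Fin n // q.1 < q.2} => x q.val.1 * x q.val.2) :
          (Fin n → ℝ) × ({q : Fin n × Fin n // q.1 < q.2} → ℝ))
          = (1 - x a) • (x0, fun q : {q : Fin n × Fin n // q.1 < q.2} => x0 q.val.1 * x0 q.val.2)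
            + (x a) • (x1, fun q : {q : Fin n × Fin n // q.1 < q.2} => x1 q.val.1 * x1 q.val.2) := by
        apply Prod.ext
        · funext i
          by_cases h : i = a
          · subst h; simp [x0, x1]
          · simp [x0, x1, Function.update_of_ne h]; ring
        · funext q
          have hne : q.val.1 ≠ q.val.2 := ne_of_lt q.prop
          by_cases h1' : q.val.1 = a
          · have h2' : q.val.2 ≠ a := fun h => hne (h1'.trans h.symm)
            subst h1'
            simp [x0, x1, Function.update_self, Function.update_of_ne h2']
            try ring
          · by_cases h2' : q.val.2 = a
            · subst h2'
              simp [x0, x1, Function.update_self, Function.update_of_ne h1']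
              try ring
            · simp [x0, x1, Function.update_of_ne h1', Function.update_of_ne h2']
              ring
      rw [key]
      exact (convex_convexHull ℝ _) m0 m1 (by linarith [hxa.2]) hxa.1 (by ring)

/-- The Boolean Quadric Polytope, the convex hull of the binary points of the
quadratic variety `{(x, (x_i x_j)_{i<j})}`, equals the convex hull of the whole
variety restricted to the unit box. -/
theorem stmt16 (n : ℕ) (hn : 1 ≤ n) :
    convexHull ℝ {p : (Fin n → ℝ) × ({q : Fin n × Fin n // q.1 < q.2} → ℝ) |
        (∀ i, p.1 i = 0 ∨ p.1 i = 1) ∧ ∀ q, p.2 q = p.1 q.val.1 * p.1 q.val.2}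
      = convexHull ℝ {p : (Fin n → ℝ) × ({q : Fin n × Fin n // q.1 < q.2} → ℝ) |
        (∀ i, p.1 i ∈ Set.Icc (0:ℝ) 1) ∧ ∀ q, p.2 q = p.1 q.val.1 * p.1 q.val.2} := by
  apply Subset.antisymm
  · apply convexHull_mono
    intro p hp
    exact ⟨fun i => by rcases hp.1 i with h | h <;> rw [h] <;> norm_num, hp.2⟩
  · apply convexHull_min _ (convex_convexHull ℝ _)
    rintro ⟨x, y⟩ ⟨hx, hy⟩
    have : y = fun q => x q.val.1 * x q.val.2 := funext hy
    subst this
    exact stmt16_aux n Finset.univ x hx (fun i hi => absurd (Finset.mem_univ i) hi)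
end
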